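/- arXiv:1105.5961 — 3 statements merged into one kernel-verified Lean document; each statement's English description precedes it below -/
import Mathlib

section
/- Let (G,μ) be a countable measured groupoid with measure ν on G and Radon–Nikodym derivative δ = dν⁻¹/dν. If g is a Borel function on G such that f = δ^{-1/2} g belongs to I(G), then the right convolution operator ξ ↦ ξ*g is bounded on L²(G,ν) with norm at most ‖f‖_I. -/
open MeasureTheory ENNReal Filter Topology
open scoped ComplexOrder

/-- A discrete (countable) groupoid, given algebraically: a type `E` of arrows over a
unit space `X`, with range `r`, source `s`, a (total) partial multiplication `mul`
(only constrained on composable pairs), inversion, and countable source fibres. -/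
structure CountableGroupoid where
  E : Type
  X : Type
  r : E → X
  s : E → X
  unit : X → E
  mul : E → E → E
  inv : E → E
  r_unit : ∀ x, r (unit x) = x
  s_unit : ∀ x, s (unit x) = x
  mul_assoc' : ∀ a b c, s a = r b → s b = r c → mul (mul a b) c = mul a (mul b c)
  r_mul : ∀ a b, s a = r b → r (mul a b) = r a
  s_mul : ∀ a b, s a = r b → s (mul a b) = s b
  unit_mul : ∀ a, mul (unit (r a)) a = a
  mul_unit : ∀ a, mul a (unit (s a)) = a
  r_inv : ∀ a, r (inv a) = s a
  s_inv : ∀ a, s (inv a) = r a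
  mul_inv : ∀ a, mul a (inv a) = unit (r a)
  inv_mul : ∀ a, mul (inv a) a = unit (s a)
  countable_fibers : ∀ x, {γ : E | s γ = x}.Countable

namespace CountableGroupoid

variable (G : CountableGroupoid)

/-- Sum of a nonnegative function over the source fibre `G_x = s⁻¹(x)`. -/
noncomputable def sFiberSum (f : G.E → ℝ≥0∞) (x : G.X) : ℝ≥0∞ :=
  ∑' γ : {γ : G.E // G.s γ = x}, f γ.1

/-- Sum of a nonnegative function over the range fibre `G^x = r⁻¹(x)`. -/
noncomputable def rFiberSum (f : G.E → ℝ≥0∞) (x : G.X) : ℝ≥0∞ :=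
  ∑' γ : {γ : G.E // G.r γ = x}, f γ.1

/-- The `I`-norm : `max (ess sup_x Σ_{r γ = x} |f γ|, ess sup_x Σ_{s γ = x} |f γ|)`. -/
noncomputable def Inorm [MeasurableSpace G.X] (μ : Measure G.X) (f : G.E → ℂ) : ℝ≥0∞ :=
  max (essSup (fun x => G.rFiberSum (fun γ => (‖f γ‖₊ : ℝ≥0∞)) x) μ)
      (essSup (fun x => G.sFiberSum (fun γ => (‖f γ‖₊ : ℝ≥0∞)) x) μ)

/-- The factorizations `γ = γ₁ γ₂` of an arrow `γ`. -/
def Factorizations (γ : G.E) : Type :=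
  {p : G.E × G.E // G.s p.1 = G.r p.2 ∧ G.mul p.1 p.2 = γ}

/-- Convolution product `(f*g)(γ) = Σ_{γ₁γ₂ = γ} f(γ₁) g(γ₂)`. -/
noncomputable def conv (f g : G.E → ℂ) (γ : G.E) : ℂ :=
  ∑' p : G.Factorizations γ, f p.1.1 * g p.1.2

/-- Involution `f^*(γ) = conj (f (γ⁻¹))`. -/
noncomputable def starF (f : G.E → ℂ) (γ : G.E) : ℂ := (starRingEnd ℂ) (f (G.inv γ))

/-- The measure `ν` on `G` induced by `μ`: `ν(A) = ∫_X #(A ∩ s⁻¹ x) dμ(x)`. -/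
noncomputable def nuSet [MeasurableSpace G.X] (μ : Measure G.X) (A : Set G.E) : ℝ≥0∞ :=
  ∫⁻ x, (∑' _γ : ↥(A ∩ {γ : G.E | G.s γ = x}), (1 : ℝ≥0∞)) ∂μ

/-- Positive definiteness of a function on a groupoid. -/
def IsPosDef (F : G.E → ℂ) : Prop :=
  ∀ (x : G.X) (n : ℕ) (γ : Fin n → G.E), (∀ i, G.r (γ i) = x) →
    ∀ lam : Fin n → ℂ,
      0 ≤ ∑ i, ∑ j, lam i * (starRingEnd ℂ) (lam j) * F (G.mul (G.inv (γ i)) (γ j))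

/-- Real conditionally negative definite functions on a groupoid. -/
def IsCondNegDef (ψ : G.E → ℝ) : Prop :=
  (∀ x, ψ (G.unit x) = 0) ∧ (∀ γ, ψ (G.inv γ) = ψ γ) ∧
  (∀ (x : G.X) (n : ℕ) (γ : Fin n → G.E), (∀ i, G.r (γ i) = x) →
    ∀ lam : Fin n → ℝ, (∑ i, lam i) = 0 →
      (∑ i, ∑ j, lam i * lam j * ψ (G.mul (G.inv (γ i)) (γ j))) ≤ 0)

/-- `Q^n` : products of `n` elements of `Q` (with `Q^0` the units). -/
def Qpow (Q : Set G.E) : ℕ → Set G.E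
  | 0 => Set.range G.unit
  | n+1 => {γ : G.E | ∃ a ∈ Q, ∃ b ∈ Qpow Q n, G.s a = G.r b ∧ γ = G.mul a b}

/-- A reduced composable chain of elements of `Q` (no backtracking). -/
def IsReducedChain (Q : Set G.E) : List G.E → Prop
  | [] => True
  | [a] => a ∈ Q
  | a :: b :: l => a ∈ Q ∧ G.s a = G.r b ∧ b ≠ G.inv a ∧ IsReducedChain Q (b :: l)

/-- A treeing: a symmetric generating set disjoint from the units such that each fibre
graph is a tree (no nontrivial reduced loops). -/
def IsTreeing (Q : Set G.E) : Prop :=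
  (∀ γ ∈ Q, G.inv γ ∈ Q) ∧
  (∀ x, G.unit x ∉ Q) ∧
  (∀ γ : G.E, ∃ n, γ ∈ G.Qpow Q n) ∧
  (∀ (a : G.E) (l : List G.E), G.IsReducedChain Q (a :: l) →
      List.foldl G.mul a l ≠ G.unit (G.r a))

/-- The length function `ψ(γ) = d_{r γ}(r γ, γ) = min {n | γ ∈ Q^n}`. -/
noncomputable def treeDist (Q : Set G.E) (γ : G.E) : ℝ :=
  ((sInf {n : ℕ | γ ∈ G.Qpow Q n} : ℕ) : ℝ)

/-- The `A = L^∞(X)`-valued inner product `⟨ξ,η⟩_A(x) = Σ_{s γ = x} conj (ξ γ) η γ`. -/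
noncomputable def innerA (ξ η : G.E → ℂ) (x : G.X) : ℂ :=
  ∑' γ : {γ : G.E // G.s γ = x}, (starRingEnd ℂ) (ξ γ.1) * η γ.1

/-- The Haagerup property for a countable measured groupoid. -/
def HaagerupProperty [MeasurableSpace G.X] (μ : Measure G.X) : Prop :=
  ∃ F : ℕ → G.E → ℂ,
    (∀ n, G.IsPosDef (F n)) ∧
    (∀ n, ∀ᵐ x ∂μ, F n (G.unit x) = 1) ∧
    (∀ n, ∀ ε : ℝ, 0 < ε → G.nuSet μ {γ : G.E | ε < ‖F n γ‖} < ⊤) ∧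
    G.nuSet μ {γ : G.E | ¬ Tendsto (fun n => F n γ) atTop (nhds (1 : ℂ))} = 0

end CountableGroupoid

/-! Schur test. With `g = δ^{1/2} f`, Cauchy–Schwarz over the factorizations `γ = γ₁ γ₂`, weighted
by `|f γ₂|`, bounds `|(ξ * g) γ|²` by `Σ δ(γ₂) |f γ₂| |ξ γ₁|²` times the `s`-fibre sum of `|f|`
at `s γ`, which is at most `‖f‖_I` almost everywhere. After summing over `s`-fibres and
integrating, the defining property of `δ = dν⁻¹/dν` trades `δ(γ₂) |f γ₂|` for `|f γ₂⁻¹|`, which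
turns the remaining weight into the `r`-fibre sum of `|f|`, again at most `‖f‖_I`. -/

open scoped NNReal

namespace ENNReal

theorem two_mul_le_add_sq (a b : ℝ≥0∞) : 2 * a * b ≤ a ^ 2 + b ^ 2 := by
  rcases eq_or_ne a ⊤ with rfl | ha
  · rcases eq_or_ne b 0 with rfl | hb <;> simp [*]
  rcases eq_or_ne b ⊤ with rfl | hb
  · rcases eq_or_ne a 0 with rfl | ha' <;> simp [*]
  lift a to ℝ≥0 using ha
  lift b to ℝ≥0 using hb
  exact_mod_cast _root_.two_mul_le_add_sq a b

theorem tsum_mul_tsum {ι κ : Type*} (u : ι → ℝ≥0∞) (v : κ → ℝ≥0∞) :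
    (∑' i, u i) * ∑' j, v j = ∑' i, ∑' j, u i * v j := by
  rw [← ENNReal.tsum_mul_right]
  exact tsum_congr fun i => ENNReal.tsum_mul_left.symm

theorem tsum_mul_sq_le {ι : Type*} (w a : ι → ℝ≥0∞) :
    (∑' i, w i * a i) ^ 2 ≤ (∑' i, w i * a i ^ 2) * ∑' i, w i := by
  have hswap : ∑' i, ∑' j, w i * (w j * a j ^ 2) = ∑' i, ∑' j, w i * a i ^ 2 * w j := by
    rw [ENNReal.tsum_comm]
    exact tsum_congr fun _ => tsum_congr fun _ => by ring
  have h2 : 2 * (∑' i, w i * a i) ^ 2 ≤ 2 * ((∑' i, w i * a i ^ 2) * ∑' i, w i) :=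
    calc 2 * (∑' i, w i * a i) ^ 2
        = ∑' i, ∑' j, w i * w j * (2 * a i * a j) := by
          rw [sq, tsum_mul_tsum, ← ENNReal.tsum_mul_left]
          exact tsum_congr fun i => by
            rw [← ENNReal.tsum_mul_left]; exact tsum_congr fun j => by ring
      _ ≤ ∑' i, ∑' j, w i * w j * (a i ^ 2 + a j ^ 2) := by
          gcongr with i j
          exact two_mul_le_add_sq _ _
      _ = ∑' i, ∑' j, w i * a i ^ 2 * w j + ∑' i, ∑' j, w i * (w j * a j ^ 2) := by
          rw [← ENNReal.tsum_add]
          exact tsum_congr fun i => by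
            rw [← ENNReal.tsum_add]; exact tsum_congr fun j => by ring
      _ = 2 * ((∑' i, w i * a i ^ 2) * ∑' i, w i) := by rw [hswap, tsum_mul_tsum, two_mul]
  exact (ENNReal.mul_le_mul_iff_right two_ne_zero ofNat_ne_top).mp h2

theorem ofReal_sqrt_sq (x : ℝ) : ENNReal.ofReal √x ^ 2 = ENNReal.ofReal x := by
  rw [← ENNReal.ofReal_pow (Real.sqrt_nonneg x), Real.sq_sqrt', ofReal_max, ofReal_zero, max_zero]

end ENNReal

theorem MeasureTheory.lintegral_mul_le_lintegral_mul_const_of_ae_le {α : Type*} [MeasurableSpace α]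
    {μ : Measure α} {f g : α → ℝ≥0∞} {c : ℝ≥0∞} (hc : c ≠ ⊤) (hg : ∀ᵐ x ∂μ, g x ≤ c) :
    ∫⁻ x, f x * g x ∂μ ≤ (∫⁻ x, f x ∂μ) * c :=
  (lintegral_mono_ae (hg.mono fun _ hx => mul_le_mul_right hx _)).trans_eq
    (lintegral_mul_const' c f hc)

namespace CountableGroupoid

variable (G : CountableGroupoid)

theorem inv_inv (a : G.E) : G.inv (G.inv a) = a :=
  calc G.inv (G.inv a) = G.mul (G.inv (G.inv a)) (G.mul (G.inv a) a) := by
        rw [G.inv_mul, ← G.r_inv a, ← G.s_inv (G.inv a), G.mul_unit]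
    _ = G.mul (G.mul (G.inv (G.inv a)) (G.inv a)) a :=
        (G.mul_assoc' _ _ _ (G.s_inv _) (G.s_inv a)).symm
    _ = a := by rw [G.inv_mul, G.s_inv, G.unit_mul]

theorem factorization_s_snd {γ : G.E} (p : G.Factorizations γ) : G.s p.1.2 = G.s γ :=
  (G.s_mul _ _ p.2.1).symm.trans (congrArg G.s p.2.2)

def factorizationsEquiv (γ : G.E) : {b : G.E // G.s b = G.s γ} ≃ G.Factorizations γ where
  toFun b := ⟨(G.mul γ (G.inv b.1), b.1), by
    have hγb : G.s γ = G.r (G.inv b.1) := by rw [G.r_inv, b.2]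
    refine ⟨by rw [G.s_mul _ _ hγb, G.s_inv], ?_⟩
    rw [G.mul_assoc' _ _ _ hγb (G.s_inv b.1), G.inv_mul, b.2, G.mul_unit]⟩
  invFun p := ⟨p.1.2, G.factorization_s_snd p⟩
  left_inv _ := rfl
  right_inv := by
    rintro ⟨⟨a, b⟩, hab, rfl⟩
    refine Subtype.ext (Prod.ext ?_ rfl)
    change G.mul (G.mul a b) (G.inv b) = a
    rw [G.mul_assoc' _ _ _ hab (G.r_inv b).symm, G.mul_inv, ← hab, G.mul_unit]

def sigmaFactorizationsEquiv (x : G.X) :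
    (Σ b : {b : G.E // G.s b = x}, {a : G.E // G.s a = G.r b.1}) ≃
      Σ γ : {γ : G.E // G.s γ = x}, G.Factorizations γ.1 where
  toFun q := ⟨⟨G.mul q.2.1 q.1.1, by rw [G.s_mul _ _ q.2.2, q.1.2]⟩, ⟨(q.2.1, q.1.1), q.2.2, rfl⟩⟩
  invFun p := ⟨⟨p.2.1.2, (G.factorization_s_snd p.2).trans p.1.2⟩, ⟨p.2.1.1, p.2.2.1⟩⟩
  left_inv _ := rfl
  right_inv p := Sigma.subtype_ext (Subtype.ext p.2.2.2) rfl

theorem tsum_factorizations_snd (F : G.E → ℝ≥0∞) (γ : G.E) :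
    ∑' p : G.Factorizations γ, F p.1.2 = G.sFiberSum F (G.s γ) :=
  ((G.factorizationsEquiv γ).tsum_eq fun p => F p.1.2).symm

theorem sFiberSum_tsum_factorizations (F : G.E → G.E → ℝ≥0∞) (x : G.X) :
    G.sFiberSum (fun γ => ∑' p : G.Factorizations γ, F p.1.1 p.1.2) x =
      G.sFiberSum (fun b => G.sFiberSum (fun a => F a b) (G.r b)) x :=
  calc ∑' γ : {γ : G.E // G.s γ = x}, ∑' p : G.Factorizations γ.1, F p.1.1 p.1.2
      = ∑' q : Σ γ : {γ : G.E // G.s γ = x}, G.Factorizations γ.1, F q.2.1.1 q.2.1.2 :=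
        (ENNReal.tsum_sigma' (β := fun γ : {γ : G.E // G.s γ = x} => G.Factorizations γ.1)
          fun q => F q.2.1.1 q.2.1.2).symm
    _ = ∑' q : Σ b : {b : G.E // G.s b = x}, {a : G.E // G.s a = G.r b.1}, F q.2.1 q.1.1 :=
        ((G.sigmaFactorizationsEquiv x).tsum_eq _).symm
    _ = ∑' b : {b : G.E // G.s b = x}, ∑' a : {a : G.E // G.s a = G.r b.1}, F a.1 b.1 :=
        ENNReal.tsum_sigma' (β := fun b : {b : G.E // G.s b = x} => {a : G.E // G.s a = G.r b.1})
          fun q => F q.2.1 q.1.1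

theorem sFiberSum_mul_comp_s (F : G.E → ℝ≥0∞) (H : G.X → ℝ≥0∞) (x : G.X) :
    G.sFiberSum (fun γ => F γ * H (G.s γ)) x = G.sFiberSum F x * H x := by
  rw [sFiberSum, sFiberSum, ← ENNReal.tsum_mul_right]
  exact tsum_congr fun γ => congrArg (F γ.1 * H ·) γ.2

theorem rFiberSum_eq_sFiberSum_inv (F : G.E → ℝ≥0∞) (x : G.X) :
    G.rFiberSum F x = G.sFiberSum (fun γ => F (G.inv γ)) x := by
  let e : {γ : G.E // G.r γ = x} ≃ {γ : G.E // G.s γ = x} :=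
    { toFun γ := ⟨G.inv γ, (G.s_inv γ).trans γ.2⟩
      invFun γ := ⟨G.inv γ, (G.r_inv γ).trans γ.2⟩
      left_inv γ := Subtype.ext (G.inv_inv γ)
      right_inv γ := Subtype.ext (G.inv_inv γ) }
  rw [sFiberSum, ← e.tsum_eq]
  exact tsum_congr fun γ => congrArg F (G.inv_inv γ.1).symm

section Inorm

variable [MeasurableSpace G.X] (μ : Measure G.X) (f : G.E → ℂ)

theorem ae_rFiberSum_le_Inorm : ∀ᵐ x ∂μ, G.rFiberSum (fun γ => ‖f γ‖ₑ) x ≤ G.Inorm μ f :=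
  (ENNReal.ae_le_essSup _).mono fun _ hx => hx.trans (le_max_left _ _)

theorem ae_sFiberSum_le_Inorm : ∀ᵐ x ∂μ, G.sFiberSum (fun γ => ‖f γ‖ₑ) x ≤ G.Inorm μ f :=
  (ENNReal.ae_le_essSup _).mono fun _ hx => hx.trans (le_max_right _ _)

end Inorm

theorem enorm_conv_sq_le (δ : G.E → ℝ) (ξ g f : G.E → ℂ)
    (hgf : ∀ γ, g γ = (√(δ γ) : ℂ) * f γ) (γ : G.E) :
    ‖G.conv ξ g γ‖ₑ ^ 2 ≤
      (∑' p : G.Factorizations γ, ENNReal.ofReal (δ p.1.2) * ‖f p.1.2‖ₑ * ‖ξ p.1.1‖ₑ ^ 2) *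
        G.sFiberSum (fun b => ‖f b‖ₑ) (G.s γ) := by
  have hg : ∀ b, ‖g b‖ₑ = ENNReal.ofReal √(δ b) * ‖f b‖ₑ := fun b => by
    rw [hgf, enorm_mul, ← ofReal_norm, Complex.norm_real,
      Real.norm_of_nonneg (Real.sqrt_nonneg _)]
  calc ‖G.conv ξ g γ‖ₑ ^ 2
      ≤ (∑' p : G.Factorizations γ, ‖f p.1.2‖ₑ * (ENNReal.ofReal √(δ p.1.2) * ‖ξ p.1.1‖ₑ)) ^ 2 := by
        gcongr
        refine enorm_tsum_le_tsum_enorm.trans_eq (tsum_congr fun p => ?_)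
        rw [enorm_mul, hg]
        ring
    _ ≤ _ := ENNReal.tsum_mul_sq_le _ _
    _ = _ := by
        rw [G.tsum_factorizations_snd (fun b => ‖f b‖ₑ)]
        congr 1
        exact tsum_congr fun p => by rw [mul_pow, ENNReal.ofReal_sqrt_sq]; ring

theorem lintegral_sFiberSum_factorizations_eq_rFiberSum_mul [MeasurableSpace G.X]
    (μ : Measure G.X) (δ : G.E → ℝ)
    (hδ : ∀ F : G.E → ℝ≥0∞,
      (∫⁻ x, G.sFiberSum (fun γ => F (G.inv γ)) x ∂μ) =
      ∫⁻ x, G.sFiberSum (fun γ => ENNReal.ofReal (δ γ) * F γ) x ∂μ)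
    (ξ f : G.E → ℂ) :
    ∫⁻ x, G.sFiberSum (fun γ => ∑' p : G.Factorizations γ,
        ENNReal.ofReal (δ p.1.2) * ‖f p.1.2‖ₑ * ‖ξ p.1.1‖ₑ ^ 2) x ∂μ =
      ∫⁻ x, G.rFiberSum (fun γ => ‖f γ‖ₑ) x * G.sFiberSum (fun γ => ‖ξ γ‖ₑ ^ 2) x ∂μ := by
  calc _ = ∫⁻ x, G.sFiberSum (fun b => ENNReal.ofReal (δ b) *
          (‖f b‖ₑ * G.sFiberSum (fun a => ‖ξ a‖ₑ ^ 2) (G.r b))) x ∂μ := by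
        refine lintegral_congr fun x => ?_
        refine (G.sFiberSum_tsum_factorizations
          (fun a b => ENNReal.ofReal (δ b) * ‖f b‖ₑ * ‖ξ a‖ₑ ^ 2) x).trans ?_
        congr 1
        ext b
        exact ENNReal.tsum_mul_left.trans (mul_assoc _ _ _)
    _ = ∫⁻ x, G.sFiberSum (fun b => ‖f (G.inv b)‖ₑ *
          G.sFiberSum (fun a => ‖ξ a‖ₑ ^ 2) (G.s b)) x ∂μ := by
        rw [← hδ]
        simp only [G.r_inv]
    _ = _ := by simp only [G.sFiberSum_mul_comp_s, G.rFiberSum_eq_sFiberSum_inv]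

end CountableGroupoid

theorem right_convolution_bounded_general (G : CountableGroupoid) [MeasurableSpace G.X]
    (μ : Measure G.X) (δ : G.E → ℝ)
    (hδ : ∀ F : G.E → ℝ≥0∞,
      (∫⁻ x, G.sFiberSum (fun γ => F (G.inv γ)) x ∂μ) =
      ∫⁻ x, G.sFiberSum (fun γ => ENNReal.ofReal (δ γ) * F γ) x ∂μ)
    (g f : G.E → ℂ) (hgf : ∀ γ, g γ = (Real.sqrt (δ γ) : ℂ) * f γ)
    (hf : G.Inorm μ f ≠ ⊤) (ξ : G.E → ℂ) :
    (∫⁻ x, G.sFiberSum (fun γ => (‖G.conv ξ g γ‖₊ : ℝ≥0∞) ^ 2) x ∂μ) ≤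
      (G.Inorm μ f) ^ 2 * ∫⁻ x, G.sFiberSum (fun γ => (‖ξ γ‖₊ : ℝ≥0∞) ^ 2) x ∂μ := by
  set Sξ : G.X → ℝ≥0∞ := G.sFiberSum fun γ => ‖ξ γ‖ₑ ^ 2
  calc ∫⁻ x, G.sFiberSum (fun γ => ‖G.conv ξ g γ‖ₑ ^ 2) x ∂μ
      ≤ ∫⁻ x, G.sFiberSum (fun γ => ∑' p : G.Factorizations γ,
          ENNReal.ofReal (δ p.1.2) * ‖f p.1.2‖ₑ * ‖ξ p.1.1‖ₑ ^ 2) x *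
            G.sFiberSum (fun b => ‖f b‖ₑ) x ∂μ := by
        refine lintegral_mono fun x => ?_
        rw [← G.sFiberSum_mul_comp_s]
        exact ENNReal.tsum_le_tsum fun γ => G.enorm_conv_sq_le δ ξ g f hgf γ
    _ ≤ (∫⁻ x, G.rFiberSum (fun γ => ‖f γ‖ₑ) x * Sξ x ∂μ) * G.Inorm μ f := by
        rw [← G.lintegral_sFiberSum_factorizations_eq_rFiberSum_mul μ δ hδ ξ f]
        exact lintegral_mul_le_lintegral_mul_const_of_ae_le hf (G.ae_sFiberSum_le_Inorm μ f)
    _ ≤ (∫⁻ x, Sξ x ∂μ) * G.Inorm μ f * G.Inorm μ f := by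
        gcongr
        simp_rw [mul_comm (G.rFiberSum _ _)]
        exact lintegral_mul_le_lintegral_mul_const_of_ae_le hf (G.ae_rFiberSum_le_Inorm μ f)
    _ = G.Inorm μ f ^ 2 * ∫⁻ x, Sξ x ∂μ := by ring

/-- if `g = δ^{1/2} f` with `f ∈ I(G)` (where `δ = dν⁻¹/dν`), then right
convolution by `g` is bounded on `L²(G,ν)` with norm at most `‖f‖_I`. -/
theorem right_convolution_bounded (G : CountableGroupoid) [MeasurableSpace G.X]
    (μ : Measure G.X) [IsProbabilityMeasure μ]
    (δ : G.E → ℝ) (hδpos : ∀ γ, 0 < δ γ)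
    (hδ : ∀ F : G.E → ℝ≥0∞,
      (∫⁻ x, G.sFiberSum (fun γ => F (G.inv γ)) x ∂μ) =
      ∫⁻ x, G.sFiberSum (fun γ => ENNReal.ofReal (δ γ) * F γ) x ∂μ)
    (g f : G.E → ℂ) (hgf : ∀ γ, g γ = (Real.sqrt (δ γ) : ℂ) * f γ)
    (hf : G.Inorm μ f ≠ ⊤) (ξ : G.E → ℂ) :
    (∫⁻ x, G.sFiberSum (fun γ => (‖G.conv ξ g γ‖₊ : ℝ≥0∞) ^ 2) x ∂μ) ≤
      (G.Inorm μ f) ^ 2 * ∫⁻ x, G.sFiberSum (fun γ => (‖ξ γ‖₊ : ℝ≥0∞) ^ 2) x ∂μ :=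
  right_convolution_bounded_general G μ δ hδ g f hgf hf ξ
end

section
/- Let T be a tree (connected acyclic graph) with path metric d. For any vertices v₁,…,v_n and real numbers λ₁,…,λ_n with Σ_i λ_i = 0, one has Σ_{i,j} λ_i λ_j d(v_i, v_j) ≤ 0. -/
/-!
Root the tree at a vertex `r` and let `E x` be the edge set of the path from `r` to `x`. The path
from `x` to `y` uses exactly the edges of `E x ∆ E y`, because an edge lies on it iff it separates
`x` from `y`. Hence `d(x, y) = ∑ₑ (1_{E x}(e) - 1_{E y}(e))²`, a sum of squared distances, and
`∑ λᵢ λⱼ (aᵢ - aⱼ)² = -2 (∑ λᵢ aᵢ)² ≤ 0` whenever `∑ λᵢ = 0`.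
-/

open Finset SimpleGraph
open scoped symmDiff

section ConditionallyNegativeDefinite

variable {ι α R : Type*} [Fintype ι]

theorem sum_sum_mul_mul_sq_sub_eq_neg_two_mul_sq [CommRing R] {lam : ι → R}
    (h : ∑ i, lam i = 0) (a : ι → R) :
    ∑ i, ∑ j, lam i * lam j * (a i - a j) ^ 2 = -2 * (∑ i, lam i * a i) ^ 2 := by
  calc ∑ i, ∑ j, lam i * lam j * (a i - a j) ^ 2
      = ∑ i, ∑ j, (lam i * a i ^ 2 * lam j + lam i * (lam j * a j ^ 2)
          - 2 * (lam i * a i) * (lam j * a j)) := by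
        congr! 2; ring
    _ = (∑ i, lam i * a i ^ 2) * ∑ j, lam j + (∑ i, lam i) * ∑ j, lam j * a j ^ 2
          - 2 * (∑ i, lam i * a i) * ∑ j, lam j * a j := by
        simp only [sum_add_distrib, sum_sub_distrib, ← mul_sum, ← sum_mul]
    _ = -2 * (∑ i, lam i * a i) ^ 2 := by rw [h]; ring

theorem sum_sum_mul_mul_sq_sub_nonpos [CommRing R] [LinearOrder R] [IsStrictOrderedRing R]
    {lam : ι → R} (h : ∑ i, lam i = 0) (a : ι → R) :
    ∑ i, ∑ j, lam i * lam j * (a i - a j) ^ 2 ≤ 0 := by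
  rw [sum_sum_mul_mul_sq_sub_eq_neg_two_mul_sq h]
  nlinarith [sq_nonneg (∑ i, lam i * a i)]

theorem Finset.card_symmDiff_eq_sum_sq_sub [Ring R] [DecidableEq α] {s t U : Finset α}
    (hs : s ⊆ U) (ht : t ⊆ U) :
    (#(s ∆ t) : R) = ∑ x ∈ U, ((if x ∈ s then 1 else 0) - (if x ∈ t then 1 else 0)) ^ 2 := by
  have hsq : ∀ x, ((if x ∈ s then (1 : R) else 0) - (if x ∈ t then 1 else 0)) ^ 2 =
      if x ∈ s ∆ t then 1 else 0 := by
    intro x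
    by_cases hxs : x ∈ s <;> by_cases hxt : x ∈ t <;> simp [hxs, hxt, mem_symmDiff]
  have hU : s ∆ t ⊆ U := symmDiff_subset_union.trans (union_subset hs ht)
  rw [sum_congr rfl fun x _ => hsq x, sum_ite_mem, inter_eq_right.mpr hU, sum_const, nsmul_one]

theorem sum_sum_mul_mul_card_symmDiff_nonpos [CommRing R] [LinearOrder R]
    [IsStrictOrderedRing R] [DecidableEq α] {lam : ι → R}
    (h : ∑ i, lam i = 0) (A : ι → Finset α) :
    ∑ i, ∑ j, lam i * lam j * (#(A i ∆ A j) : R) ≤ 0 := by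
  set U := univ.biUnion A
  have hA : ∀ i, A i ⊆ U := fun i => subset_biUnion_of_mem A (mem_univ i)
  calc ∑ i, ∑ j, lam i * lam j * (#(A i ∆ A j) : R)
      = ∑ x ∈ U, ∑ i, ∑ j, lam i * lam j *
          ((if x ∈ A i then (1 : R) else 0) - (if x ∈ A j then 1 else 0)) ^ 2 := by
        simp only [card_symmDiff_eq_sum_sq_sub (R := R) (hA _) (hA _), mul_sum]
        exact (sum_congr rfl fun i _ => sum_comm).trans sum_comm
    _ ≤ 0 := sum_nonpos fun x _ => sum_sum_mul_mul_sq_sub_nonpos h _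

end ConditionallyNegativeDefinite

namespace SimpleGraph

variable {V : Type*} {G : SimpleGraph V}

theorem Reachable.reachable_deleteEdges_or {u a : V} (h : G.Reachable u a) (b : V) :
    (G.deleteEdges {s(a, b)}).Reachable u a ∨ (G.deleteEdges {s(a, b)}).Reachable u b := by
  rw [reachable_iff_reflTransGen] at h
  induction h using Relation.ReflTransGen.head_induction_on with
  | refl => exact .inl .rfl
  | @head x y hxy _ ih =>
    by_cases he : s(x, y) = s(a, b)
    · rcases Sym2.eq_iff.mp he with ⟨rfl, -⟩ | ⟨rfl, -⟩
      · exact .inl .rfl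
      · exact .inr .rfl
    · have hxy' : (G.deleteEdges {s(a, b)}).Adj x y := by
        simp only [deleteEdges_adj, Set.mem_singleton_iff]
        exact ⟨hxy, he⟩
      exact ih.imp hxy'.reachable.trans hxy'.reachable.trans

theorem reachable_deleteEdges_iff_reachable_iff {u w a : V} (hu : G.Reachable u a)
    (hw : G.Reachable w a) (b : V) :
    (G.deleteEdges {s(a, b)}).Reachable u w ↔
      ((G.deleteEdges {s(a, b)}).Reachable u a ↔ (G.deleteEdges {s(a, b)}).Reachable w a) := by
  refine ⟨fun huw => ⟨huw.symm.trans, huw.trans⟩, fun hiff => ?_⟩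
  by_cases hua : (G.deleteEdges {s(a, b)}).Reachable u a
  · exact hua.trans (hiff.mp hua).symm
  · have hwa : ¬ (G.deleteEdges {s(a, b)}).Reachable w a := mt hiff.mpr hua
    exact ((hu.reachable_deleteEdges_or b).resolve_left hua).trans
      ((hw.reachable_deleteEdges_or b).resolve_left hwa).symm

theorem IsAcyclic.mem_edges_iff_not_reachable_deleteEdges (hG : G.IsAcyclic) {u w : V}
    {p : G.Walk u w} (hp : p.IsPath) (e : Sym2 V) :
    e ∈ p.edges ↔ ¬ (G.deleteEdges {e}).Reachable u w := by
  classical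
  refine ⟨fun he => ?_, p.mem_edges_of_not_reachable_deleteEdges⟩
  obtain ⟨a, b⟩ := e
  rw [reachable_deleteEdges_iff_exists_walk]
  rintro ⟨q, hq⟩
  have hpq : p = q.bypass :=
    congrArg Subtype.val ((hG.subsingleton_path u w).elim ⟨p, hp⟩ ⟨_, q.bypass_isPath⟩)
  exact hq (q.edges_bypass_subset_edges (hpq ▸ he))

theorem IsTree.edges_toFinset_eq_symmDiff [DecidableEq V] (hG : G.IsTree) {r u w : V}
    {p : G.Walk r u} {q : G.Walk r w} {s : G.Walk u w} (hp : p.IsPath) (hq : q.IsPath)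
    (hs : s.IsPath) : s.edges.toFinset = p.edges.toFinset ∆ q.edges.toFinset := by
  ext e
  obtain ⟨a, b⟩ := e
  have hmem {x y : V} {t : G.Walk x y} (ht : t.IsPath) :
      s(a, b) ∈ t.edges ↔
        ¬((G.deleteEdges {s(a, b)}).Reachable x a ↔ (G.deleteEdges {s(a, b)}).Reachable y a) :=
    (hG.isAcyclic.mem_edges_iff_not_reachable_deleteEdges ht _).trans <| not_congr <|
      reachable_deleteEdges_iff_reachable_iff (hG.connected.preconnected x a)
        (hG.connected.preconnected y a) b
  simp only [mem_symmDiff, List.mem_toFinset, hmem hp, hmem hq, hmem hs]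
  tauto

theorem IsTree.dist_eq_card_symmDiff [DecidableEq V] (hG : G.IsTree) {r u w : V}
    {p : G.Walk r u} {q : G.Walk r w} (hp : p.IsPath) (hq : q.IsPath) :
    G.dist u w = #(p.edges.toFinset ∆ q.edges.toFinset) := by
  obtain ⟨s, hs⟩ := hG.connected.exists_walk_length_eq_dist u w
  have hs_path : s.IsPath := s.isPath_of_length_eq_dist hs
  rw [← hG.edges_toFinset_eq_symmDiff hp hq hs_path,
    List.toFinset_card_of_nodup hs_path.isTrail.edges_nodup, s.length_edges, hs]

end SimpleGraph

/-- the path metric of a tree is conditionally negative definite: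
if `Σ λ_i = 0` then `Σ_{i,j} λ_i λ_j d(v_i, v_j) ≤ 0`. -/
theorem tree_dist_condNegDef {V : Type} (T : SimpleGraph V) (hT : T.IsTree)
    (n : ℕ) (v : Fin n → V) (lam : Fin n → ℝ) (h : ∑ i, lam i = 0) :
    ∑ i, ∑ j, lam i * lam j * (T.dist (v i) (v j) : ℝ) ≤ 0 := by
  classical
  obtain ⟨r⟩ := hT.connected.nonempty
  choose P hP using fun x => (hT.existsUnique_path r x).exists
  have hdist : ∀ i j, (T.dist (v i) (v j) : ℝ) =
      #((P (v i)).edges.toFinset ∆ (P (v j)).edges.toFinset) := fun i j => by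
    rw [hT.dist_eq_card_symmDiff (hP _) (hP _)]
  simp only [hdist]
  exact sum_sum_mul_mul_card_symmDiff_nonpos h _
end

section
/- Let Γ be a countable group with the Haagerup property acting on a standard probability space (X,μ) preserving the measure class of μ, and let G = X ⋊ Γ be the semidirect product groupoid. If (f_n) are normalized positive definite functions on Γ vanishing at infinity with f_n → 1 pointwise, then F_n(x,g) := f_n(g) defines positive definite functions on G with F_n = 1 on units, ν({|F_n| > ε}) < ∞ for all ε > 0, and F_n → 1 a.e. Hence (G,μ) has the Haagerup property. -/
open MeasureTheory ENNReal Filter Topology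
open scoped ComplexOrder

/-- The semidirect product groupoid `X ⋊ Γ` of a group action, with `r(x,g) = x`,
`s(x,g) = g⁻¹ • x` and `(x,g)(g⁻¹ • x, h) = (x, gh)`. -/
def actionGroupoid (X : Type) (Γ : Type) [Group Γ] [MulAction Γ X] [Countable Γ] :
    CountableGroupoid where
  E := X × Γ
  X := X
  r p := p.1
  s p := p.2⁻¹ • p.1
  unit x := (x, 1)
  mul p q := (p.1, p.2 * q.2)
  inv p := (p.2⁻¹ • p.1, p.2⁻¹)
  r_unit x := rfl
  s_unit x := by simp
  mul_assoc' a b c _ _ := by simp [mul_assoc]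
  r_mul a b _ := rfl
  s_mul a b h := by
    show (a.2 * b.2)⁻¹ • a.1 = b.2⁻¹ • b.1
    change a.2⁻¹ • a.1 = b.1 at h
    rw [mul_inv_rev, mul_smul]
    exact congrArg _ h
  unit_mul a := by simp
  mul_unit a := by simp
  r_inv a := rfl
  s_inv a := by simp
  mul_inv a := by simp
  inv_mul a := by simp
  countable_fibers x := by
    apply Set.Countable.mono _ (Set.countable_range fun g : Γ => ((g • x, g) : X × Γ))
    rintro ⟨y, g⟩ h
    refine ⟨g, Prod.ext ?_ rfl⟩
    show g • x = y
    rw [← h]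
    simp

/-!
`F_n` is `f_n` pulled back along the homomorphism `(x, g) ↦ g`, so positive definiteness and
pointwise convergence pass directly from `Γ` to `X ⋊ Γ`. For the measure condition, the source
fibre over `x` meets `{|F_n| > ε}` in at most `#{g | |f_n g| > ε}` arrows, so `ν` of that set is
at most this finite number times `μ(X)`.
-/

namespace CountableGroupoid

variable (G : CountableGroupoid) [MeasurableSpace G.X] (μ : Measure G.X)

theorem nuSet_eq_lintegral_encard (A : Set G.E) :
    G.nuSet μ A = ∫⁻ x, ((A ∩ {γ | G.s γ = x}).encard : ℝ≥0∞) ∂μ := by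
  simp only [nuSet, ENNReal.tsum_set_one]

theorem nuSet_le_of_encard_sFiber_le (A : Set G.E) (N : ℕ∞)
    (hA : ∀ x, (A ∩ {γ | G.s γ = x}).encard ≤ N) :
    G.nuSet μ A ≤ N * μ Set.univ := by
  rw [nuSet_eq_lintegral_encard, ← lintegral_const]
  exact lintegral_mono fun x => ENat.toENNReal_le.mpr (hA x)

theorem nuSet_lt_top_of_encard_sFiber_le [IsFiniteMeasure μ] (A : Set G.E) (N : ℕ)
    (hA : ∀ x, (A ∩ {γ | G.s γ = x}).encard ≤ N) :
    G.nuSet μ A < ⊤ :=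
  (G.nuSet_le_of_encard_sFiber_le μ A N hA).trans_lt
    (ENNReal.mul_lt_top (by simp) (measure_lt_top μ _))

theorem nuSet_eq_zero_of_forall_notMem {A : Set G.E} (hA : ∀ γ, γ ∉ A) : G.nuSet μ A = 0 := by
  simp [Set.eq_empty_of_forall_notMem hA, nuSet]

end CountableGroupoid

section ActionGroupoid

variable {X Γ : Type} [Group Γ] [MulAction Γ X] [Countable Γ]

theorem actionGroupoid_isPosDef_comp_snd (φ : Γ → ℂ)
    (hφ : ∀ (m : ℕ) (g : Fin m → Γ) (lam : Fin m → ℂ),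
      0 ≤ ∑ i, ∑ j, lam i * (starRingEnd ℂ) (lam j) * φ ((g i)⁻¹ * g j)) :
    (actionGroupoid X Γ).IsPosDef fun p : X × Γ => φ p.2 :=
  fun _ m γ _ lam => hφ m (fun i => (γ i).2) lam

/-- An arrow `(y, g)` with source `x` is determined by `g`, since `y = g • x`. -/
theorem actionGroupoid_encard_sFiber_le (S : Set Γ) (x : X) :
    ({p : X × Γ | p.2 ∈ S} ∩ {p | (actionGroupoid X Γ).s p = x}).encard ≤ S.encard := by
  refine Set.encard_le_encard_of_injOn (fun p hp => hp.1) ?_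
  rintro ⟨y₁, g⟩ ⟨-, hy₁⟩ ⟨y₂, g'⟩ ⟨-, hy₂⟩ (rfl : g = g')
  change g⁻¹ • y₁ = x at hy₁
  change g⁻¹ • y₂ = x at hy₂
  rw [inv_smul_eq_iff] at hy₁ hy₂
  rw [hy₁, hy₂]

theorem actionGroupoid_nuSet_preimage_snd_lt_top [MeasurableSpace X] (μ : Measure X)
    [IsFiniteMeasure μ] {S : Set Γ} (hS : S.Finite) :
    @CountableGroupoid.nuSet (actionGroupoid X Γ) (inferInstanceAs (MeasurableSpace X)) μ
      {p : X × Γ | p.2 ∈ S} < ⊤ := by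
  refine @CountableGroupoid.nuSet_lt_top_of_encard_sFiber_le (actionGroupoid X Γ)
    (inferInstanceAs (MeasurableSpace X)) μ ‹_› _ hS.toFinset.card fun x => ?_
  rw [← hS.encard_eq_coe_toFinset_card]
  exact actionGroupoid_encard_sFiber_le (X := X) S x

end ActionGroupoid

theorem semidirect_haagerup_general (X : Type) [MeasurableSpace X] (μ : Measure X)
    [IsProbabilityMeasure μ] (Γ : Type) [Group Γ] [Countable Γ] [MulAction Γ X]
    (f : ℕ → Γ → ℂ)
    (hpd : ∀ (n : ℕ) (m : ℕ) (g : Fin m → Γ) (lam : Fin m → ℂ),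
      0 ≤ ∑ i, ∑ j, lam i * (starRingEnd ℂ) (lam j) * f n ((g i)⁻¹ * g j))
    (hone : ∀ n, f n 1 = 1)
    (hvanish : ∀ (n : ℕ) (ε : ℝ), 0 < ε → {g : Γ | ε < ‖f n g‖}.Finite)
    (hlim : ∀ g : Γ, Tendsto (fun n => f n g) atTop (nhds 1)) :
    (∀ n, (actionGroupoid X Γ).IsPosDef fun p : X × Γ => f n p.2) ∧
    (∀ (n : ℕ) (x : X), f n ((x, (1 : Γ)) : X × Γ).2 = 1) ∧
    (∀ (n : ℕ) (ε : ℝ), 0 < ε →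
      @CountableGroupoid.nuSet (actionGroupoid X Γ) (inferInstanceAs (MeasurableSpace X))
        μ {p : X × Γ | ε < ‖f n p.2‖} < ⊤) ∧
    (@CountableGroupoid.nuSet (actionGroupoid X Γ) (inferInstanceAs (MeasurableSpace X)) μ
      {p : X × Γ | ¬ Tendsto (fun n => f n p.2) atTop (nhds (1 : ℂ))} = 0) ∧
    @CountableGroupoid.HaagerupProperty (actionGroupoid X Γ)
      (inferInstanceAs (MeasurableSpace X)) μ := by
  have hposDef n := actionGroupoid_isPosDef_comp_snd (X := X) (f n) (hpd n)
  have hnuLarge : ∀ (n : ℕ) (ε : ℝ), 0 < ε →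
      @CountableGroupoid.nuSet (actionGroupoid X Γ) (inferInstanceAs (MeasurableSpace X))
        μ {p : X × Γ | ε < ‖f n p.2‖} < ⊤ := fun n ε hε =>
    actionGroupoid_nuSet_preimage_snd_lt_top μ (hvanish n ε hε)
  have hnuDiverge : @CountableGroupoid.nuSet (actionGroupoid X Γ)
      (inferInstanceAs (MeasurableSpace X)) μ
      {p : X × Γ | ¬ Tendsto (fun n => f n p.2) atTop (nhds (1 : ℂ))} = 0 :=
    @CountableGroupoid.nuSet_eq_zero_of_forall_notMem (actionGroupoid X Γ)
      (inferInstanceAs (MeasurableSpace X)) μ _ fun p => not_not_intro (hlim p.2)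
  exact ⟨hposDef, fun n _ => hone n, hnuLarge, hnuDiverge,
    ⟨_, hposDef, fun n => .of_forall fun _ => hone n, hnuLarge, hnuDiverge⟩⟩

/-- if a countable group `Γ` with the Haagerup property (witnessed by
normalized positive definite functions `f_n` vanishing at infinity with `f_n → 1`)
acts on `(X,μ)` preserving the measure class, then `F_n(x,g) := f_n(g)` witnesses the
Haagerup property for the semidirect product groupoid `X ⋊ Γ`. -/
theorem semidirect_haagerup (X : Type) [MeasurableSpace X] (μ : Measure X)
    [IsProbabilityMeasure μ] (Γ : Type) [Group Γ] [Countable Γ] [MulAction Γ X]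
    (hqi : ∀ g : Γ, (μ.map fun x => g • x) ≪ μ ∧ μ ≪ (μ.map fun x => g • x))
    (f : ℕ → Γ → ℂ)
    (hpd : ∀ (n : ℕ) (m : ℕ) (g : Fin m → Γ) (lam : Fin m → ℂ),
      0 ≤ ∑ i, ∑ j, lam i * (starRingEnd ℂ) (lam j) * f n ((g i)⁻¹ * g j))
    (hone : ∀ n, f n 1 = 1)
    (hvanish : ∀ (n : ℕ) (ε : ℝ), 0 < ε → {g : Γ | ε < ‖f n g‖}.Finite)
    (hlim : ∀ g : Γ, Tendsto (fun n => f n g) atTop (nhds 1)) :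
    (∀ n, (actionGroupoid X Γ).IsPosDef fun p : X × Γ => f n p.2) ∧
    (∀ (n : ℕ) (x : X), f n ((x, (1 : Γ)) : X × Γ).2 = 1) ∧
    (∀ (n : ℕ) (ε : ℝ), 0 < ε →
      @CountableGroupoid.nuSet (actionGroupoid X Γ) (inferInstanceAs (MeasurableSpace X))
        μ {p : X × Γ | ε < ‖f n p.2‖} < ⊤) ∧
    (@CountableGroupoid.nuSet (actionGroupoid X Γ) (inferInstanceAs (MeasurableSpace X)) μ
      {p : X × Γ | ¬ Tendsto (fun n => f n p.2) atTop (nhds (1 : ℂ))} = 0) ∧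
    @CountableGroupoid.HaagerupProperty (actionGroupoid X Γ)
      (inferInstanceAs (MeasurableSpace X)) μ :=
  semidirect_haagerup_general X μ Γ f hpd hone hvanish hlim
end
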